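/- arXiv:2605.00655 — 2 statements merged into one kernel-verified Lean document; each statement's English description precedes it below -/
import Mathlib

section
/- In Fam(Set), for any object X = (X₀, X₁), the exponential of X by φ exists and is isomorphic to (X₀, fun _ => PUnit); concretely, morphisms Z × φ → X correspond naturally (in Z) to morphisms Z → (X₀, fun _ => PUnit). -/
universe u

/-- Objects of `Fam(Set)`: a base type together with a family of fibers. -/
structure Fam : Type (u + 1) where
  base : Type u
  fib : base → Type u

/-- Morphisms of `Fam(Set)`. -/
structure FamHom (X Y : Fam.{u}) : Type u where
  f0 : X.base → Y.base
  f1 : ∀ x, X.fib x → Y.fib (f0 x)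

/-- Identity morphism. -/
def FamHom.id (X : Fam.{u}) : FamHom X X := ⟨fun x => x, fun _ y => y⟩

/-- Composition of morphisms. -/
def FamHom.comp {X Y Z : Fam.{u}} (g : FamHom Y Z) (f : FamHom X Y) : FamHom X Z :=
  ⟨fun x => g.f0 (f.f0 x), fun x y => g.f1 _ (f.f1 x y)⟩

/-- The subterminal object `φ`. -/
def phi : Fam.{u} := ⟨PUnit, fun _ => PEmpty⟩

/-- Binary product in `Fam(Set)`, computed componentwise. -/
def Fam.prod (X Y : Fam.{u}) : Fam.{u} :=
  ⟨X.base × Y.base, fun p => X.fib p.1 × Y.fib p.2⟩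

/-- Functorial action of the product on morphisms. -/
def FamHom.prodMap {X X' Y Y' : Fam.{u}} (f : FamHom X X') (g : FamHom Y Y') :
    FamHom (X.prod Y) (X'.prod Y') :=
  ⟨fun p => (f.f0 p.1, g.f0 p.2), fun p q => (f.f1 p.1 q.1, g.f1 p.2 q.2)⟩

/-- The exponential of `X` by `φ`: `(X₀, fun _ => PUnit)`. -/
def expPhi (X : Fam.{u}) : Fam.{u} := ⟨X.base, fun _ => PUnit⟩

/-! Every fiber of `Z × φ` is empty, so a morphism `Z × φ → X` is nothing but its base map
`Z₀ × 1 → X₀`; the same is true of a morphism `Z → (X₀, 1)`, whose fiber maps land in `PUnit`. -/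

theorem FamHom.ext_of_isEmpty_fib {X Y : Fam.{u}} [∀ x, IsEmpty (X.fib x)] {f g : FamHom X Y}
    (h : f.f0 = g.f0) : f = g := by
  cases f; cases g
  cases h
  congr
  funext x y
  exact isEmptyElim y

instance Fam.isEmpty_fib_prod_phi (Z : Fam.{u}) (p : (Z.prod phi).base) :
    IsEmpty ((Z.prod phi).fib p) :=
  inferInstanceAs (IsEmpty (_ × PEmpty))

def expPhiEquiv (X Z : Fam.{u}) : FamHom (Z.prod phi) X ≃ FamHom Z (expPhi X) where
  toFun h := ⟨fun z => h.f0 (z, PUnit.unit), fun _ _ => PUnit.unit⟩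
  invFun k := ⟨fun p => k.f0 p.1, fun _ q => q.2.elim⟩
  left_inv _ := FamHom.ext_of_isEmpty_fib rfl
  right_inv _ := rfl

/-- `expPhi X` is the exponential object `φ ⟹ X`: morphisms
`Z × φ → X` correspond to morphisms `Z → expPhi X`, naturally in `Z`. -/
theorem expPhi_is_exponential (X : Fam.{u}) :
    ∃ e : ∀ Z : Fam.{u}, FamHom (Z.prod phi) X ≃ FamHom Z (expPhi X),
      ∀ (Z W : Fam.{u}) (g : FamHom W Z) (h : FamHom (Z.prod phi) X),
        e W (h.comp (g.prodMap (FamHom.id phi))) = (e Z h).comp g := by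
  exact ⟨expPhiEquiv X, fun _ _ _ _ => rfl⟩
end

section
/- In Fam(Set), the functor X ↦ (φ → X) (exponentiation by φ, concretely (X₀, X₁) ↦ (X₀, fun _ => PUnit)) has a right adjoint, given by (X₀, X₁) ↦ ((Σ x : X₀, X₁ x), fun _ => PUnit). Hence φ is a tiny object in Fam(Set). -/
/-!
A morphism `expPhi Z ⟶ X` sends each `z` to a point `x` of `X₀` and sends the unique
point of the fibre over `z` to a single element of `X₁ x`; that is exactly a point of
`Σ x, X₁ x`. Since the fibres of `sqrtPhi X` are `PUnit`, a morphism `Z ⟶ sqrtPhi X` carries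
the same data, and both round trips are the identity by η for structures and for `PUnit`.
-/

universe u

def expPhiHom {X Y : Fam.{u}} (f : FamHom X Y) : FamHom (expPhi X) (expPhi Y) :=
  ⟨f.f0, fun _ _ => PUnit.unit⟩

/-- The candidate right adjoint `√`: `(X₀, X₁) ↦ ((Σ x, X₁ x), fun _ => PUnit)`. -/
def sqrtPhi (X : Fam.{u}) : Fam.{u} := ⟨Σ x : X.base, X.fib x, fun _ => PUnit⟩

def sqrtPhiHom {X Y : Fam.{u}} (f : FamHom X Y) : FamHom (sqrtPhi X) (sqrtPhi Y) :=
  ⟨fun p => ⟨f.f0 p.1, f.f1 p.1 p.2⟩, fun _ _ => PUnit.unit⟩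

def expPhiSqrtHomEquiv (Z X : Fam.{u}) : FamHom (expPhi Z) X ≃ FamHom Z (sqrtPhi X) where
  toFun h := ⟨fun z => ⟨h.f0 z, h.f1 z PUnit.unit⟩, fun _ _ => PUnit.unit⟩
  invFun k := ⟨fun z => (k.f0 z).1, fun z _ => (k.f0 z).2⟩
  left_inv _ := rfl
  right_inv _ := rfl

theorem expPhiSqrtHomEquiv_naturality_left {Z W X : Fam.{u}} (g : FamHom W Z)
    (h : FamHom (expPhi Z) X) :
    expPhiSqrtHomEquiv W X (h.comp (expPhiHom g)) = (expPhiSqrtHomEquiv Z X h).comp g :=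
  rfl

theorem expPhiSqrtHomEquiv_naturality_right {Z X Y : Fam.{u}} (k : FamHom X Y)
    (h : FamHom (expPhi Z) X) :
    expPhiSqrtHomEquiv Z Y (k.comp h) = (sqrtPhiHom k).comp (expPhiSqrtHomEquiv Z X h) :=
  rfl

/-- `(φ → −) ⊣ √`, so `φ` is tiny in `Fam(Set)`: there is a bijection
`Hom(expPhi Z, X) ≃ Hom(Z, √X)` natural in `Z` and `X`. -/
theorem expPhi_left_adjoint_sqrt :
    ∃ e : ∀ Z X : Fam.{u}, FamHom (expPhi Z) X ≃ FamHom Z (sqrtPhi X),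
      (∀ (Z W X : Fam.{u}) (g : FamHom W Z) (h : FamHom (expPhi Z) X),
        e W X (h.comp (expPhiHom g)) = (e Z X h).comp g) ∧
      (∀ (Z X Y : Fam.{u}) (k : FamHom X Y) (h : FamHom (expPhi Z) X),
        e Z Y (k.comp h) = (sqrtPhiHom k).comp (e Z X h)) :=
  ⟨expPhiSqrtHomEquiv, fun _ _ _ => expPhiSqrtHomEquiv_naturality_left,
    fun _ _ _ => expPhiSqrtHomEquiv_naturality_right⟩
end
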